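/- arXiv:2202.10989 — 2 statements merged into one kernel-verified Lean document; each statement's English description precedes it below -/
import Mathlib

section
/- For a 3×3 density matrix ρ, positive semidefiniteness is equivalent to the three conditions: Tr(ρ) = 1 ≥ 0, 1 − Tr(ρ²) ≥ 0, and 1 − 3Tr(ρ²) + 2Tr(ρ³) ≥ 0, where the second and third expressions equal 2a₂ and 6a₃ for the elementary symmetric polynomials a₂, a₃ of the eigenvalues. -/
open Matrix ComplexOrder

lemma qutrit_aux_nonneg (a b c : ℝ) (hsum : a + b + c = 1)
    (h2 : 0 ≤ 1 - (a^2+b^2+c^2))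
    (h3 : 0 ≤ 1 - 3*(a^2+b^2+c^2) + 2*(a^3+b^3+c^3)) : 0 ≤ a := by
  by_contra h
  push_neg at h
  have e2 : 0 ≤ a*b + b*c + c*a := by nlinarith
  have e3 : 0 ≤ a*b*c := by nlinarith
  have hbc : 0 < b*c := by nlinarith
  nlinarith

/-- a 3×3 Hermitian trace-one matrix is positive semidefinite iff
`Tr ρ = 1 ≥ 0`, `1 − Tr(ρ²) ≥ 0` and `1 − 3Tr(ρ²) + 2Tr(ρ³) ≥ 0` (the latter two
expressions being `2a₂` and `6a₃` for the elementary symmetric polynomials of the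
eigenvalues). -/
theorem qutrit_posSemidef_iff (ρ : Matrix (Fin 3) (Fin 3) ℂ)
    (hherm : ρ.IsHermitian) (htr : ρ.trace = 1) :
    ρ.PosSemidef ↔
      ((0 : ℝ) ≤ 1 ∧
       0 ≤ 1 - (ρ * ρ).trace.re ∧
       0 ≤ 1 - 3 * (ρ * ρ).trace.re + 2 * (ρ * ρ * ρ).trace.re) := by
  set U : Matrix (Fin 3) (Fin 3) ℂ := (hherm.eigenvectorUnitary : Matrix (Fin 3) (Fin 3) ℂ) with hU
  set D : Matrix (Fin 3) (Fin 3) ℂ := diagonal (RCLike.ofReal ∘ hherm.eigenvalues) with hD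
  set l : Fin 3 → ℝ := hherm.eigenvalues with hl
  have hs : ρ = U * D * star U := hherm.spectral_theorem
  have hUU : star U * U = 1 := Matrix.mem_unitaryGroup_iff'.mp hherm.eigenvectorUnitary.2
  have hmul : ∀ A B : Matrix (Fin 3) (Fin 3) ℂ,
      (U * A * star U) * (U * B * star U) = U * (A * B) * star U := by
    intro A B
    calc (U * A * star U) * (U * B * star U) = U * A * (star U * U) * B * star U := by
          simp only [mul_assoc]
      _ = U * (A * B) * star U := by rw [hUU]; simp only [mul_assoc, mul_one, one_mul]
  have htrc : ∀ A : Matrix (Fin 3) (Fin 3) ℂ, (U * A * star U).trace = A.trace := by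
    intro A
    rw [trace_mul_cycle, hUU, one_mul]
  have h1 : l 0 + l 1 + l 2 = 1 := by
    have : ρ.trace = ∑ i, ((l i : ℂ)) := by
      conv_lhs => rw [hs, htrc, hD, trace_diagonal]
      simp
    rw [htr] at this
    have := congrArg Complex.re this.symm
    simpa [Fin.sum_univ_three] using this
  have h2 : (ρ * ρ).trace.re = (l 0)^2 + (l 1)^2 + (l 2)^2 := by
    have : (ρ * ρ).trace = ∑ i, ((l i : ℂ))^2 := by
      conv_lhs => rw [hs, hmul, htrc, hD, diagonal_mul_diagonal, trace_diagonal]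
      simp [sq]
    rw [this]
    simp [Fin.sum_univ_three, ← Complex.ofReal_pow]
  have h3 : (ρ * ρ * ρ).trace.re = (l 0)^3 + (l 1)^3 + (l 2)^3 := by
    have : (ρ * ρ * ρ).trace = ∑ i, ((l i : ℂ))^3 := by
      conv_lhs => rw [hs, hmul, hmul, htrc, hD, diagonal_mul_diagonal,
        diagonal_mul_diagonal, trace_diagonal]
      simp [pow_succ, sq, mul_assoc]
    rw [this]
    simp [Fin.sum_univ_three, ← Complex.ofReal_pow]
  rw [h2, h3]
  constructor
  · intro hpsd
    have hnn : ∀ i, 0 ≤ l i := fun i => hpsd.eigenvalues_nonneg i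
    refine ⟨zero_le_one, ?_, ?_⟩
    · nlinarith [hnn 0, hnn 1, hnn 2, h1]
    · have h6 : 1 - 3 * (l 0 ^ 2 + l 1 ^ 2 + l 2 ^ 2) + 2 * (l 0 ^ 3 + l 1 ^ 3 + l 2 ^ 3)
          = 6 * (l 0 * l 1 * l 2) := by
        have := h1
        nlinarith [h1, sq_nonneg (l 0 + l 1 + l 2)]
      rw [h6]
      have := mul_nonneg (mul_nonneg (hnn 0) (hnn 1)) (hnn 2)
      linarith
  · rintro ⟨-, ha, hb⟩
    apply hherm.posSemidef_iff_eigenvalues_nonneg.mpr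
    intro i
    fin_cases i
    · exact qutrit_aux_nonneg (l 0) (l 1) (l 2) h1 ha hb
    · refine qutrit_aux_nonneg (l 1) (l 0) (l 2) (by linarith) (by linarith) ?_
      convert hb using 2 <;> ring
    · refine qutrit_aux_nonneg (l 2) (l 1) (l 0) (by linarith) (by linarith) ?_
      convert hb using 2 <;> ring
end

section
/- For an n-qudit Hermitian matrix ρ with Bloch coefficients x_{μ₁…μ_n}, and Θ the generalized conjugation sending σ_0 ↦ σ_0 and σ_j ↦ −σ_j (j ≥ 1) in each factor, one has d^n Tr(ρ Θ^{⊗n}(ρ)) = Σ_k (−1)^k L_k, where L_k is the sum of squared Bloch coefficients with exactly k space-like indices. Consequently (−1)^n d^n Tr(ρ Θ^{⊗n}(ρ)) = d^n Tr(ρ²) − 2 Σ over L_j with (n−j) odd. -/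
/-!
Expanding both factors in the tensor-product basis, the trace of a product of two Bloch
expansions collapses to the sum of products of coefficients, because the trace of a Kronecker
product is the product of the traces and the single-site basis is trace-orthogonal. Since `Θ`
multiplies the coefficient of `σ_μ` by `(-1)` to the Hamming weight of `μ`, grouping the
multi-indices by weight gives the alternating sum of the `L_k`; the second identity is the sign
bookkeeping `(-1)^n (-1)^k = 1 - 2·[n - k odd]` for `k ≤ n`.
-/

open Matrix Finset

namespace Matrix

variable {κ l m p R : Type*} [Fintype κ] [CommSemiring R]

def piKron (A : κ → Matrix l m R) : Matrix (κ → l) (κ → m) R :=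
  of fun a b => ∏ i, A i (a i) (b i)

variable [Fintype m]

theorem piKron_mul_piKron [DecidableEq κ] (A : κ → Matrix l m R) (B : κ → Matrix m p R) :
    piKron A * piKron B = piKron fun i => A i * B i := by
  ext a c
  simp only [piKron, mul_apply, of_apply, Fintype.prod_sum, ← prod_mul_distrib]

theorem trace_piKron [DecidableEq κ] (A : κ → Matrix m m R) :
    (piKron A).trace = ∏ i, (A i).trace := by
  simp only [trace, diag, piKron, of_apply, Fintype.prod_sum]

theorem trace_piKron_mul_piKron_of_orthogonal [DecidableEq κ] {ι : Type*} [DecidableEq ι]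
    {e : ι → Matrix m m R} {c : R} (he : ∀ μ ν, (e μ * e ν).trace = if μ = ν then c else 0)
    (μ ν : κ → ι) :
    (piKron (fun i => e (μ i)) * piKron (fun i => e (ν i))).trace =
      if μ = ν then c ^ Fintype.card κ else 0 := by
  simp only [piKron_mul_piKron, trace_piKron, he]
  split_ifs with h
  · simp [h]
  · obtain ⟨i, hi⟩ := Function.ne_iff.mp h
    exact prod_eq_zero (mem_univ i) (if_neg hi)

theorem trace_sum_smul_mul_sum_smul_of_orthogonal {ι : Type*} [Fintype ι] [DecidableEq ι]
    {e : ι → Matrix m m R} {c : R} (he : ∀ μ ν, (e μ * e ν).trace = if μ = ν then c else 0)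
    (a b : ι → R) :
    ((∑ μ, a μ • e μ) * ∑ ν, b ν • e ν).trace = c * ∑ μ, a μ * b μ := by
  simp only [sum_mul, mul_sum, smul_mul_smul_comm, trace_sum, trace_smul, he, smul_eq_mul,
    mul_ite, mul_zero, sum_ite_eq', mem_univ, if_true]
  exact sum_congr rfl fun μ _ => mul_comm _ _

theorem mul_trace_inv_smul_mul_inv_smul_of_orthogonal {ι K : Type*} [Fintype ι] [DecidableEq ι]
    [Field K] {e : ι → Matrix m m K} {c : K} (hc : c ≠ 0)
    (he : ∀ μ ν, (e μ * e ν).trace = if μ = ν then c else 0) (a b : ι → K) :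
    c * ((c⁻¹ • ∑ μ, a μ • e μ) * (c⁻¹ • ∑ ν, b ν • e ν)).trace = ∑ μ, a μ * b μ := by
  rw [smul_mul_smul_comm, trace_smul, trace_sum_smul_mul_sum_smul_of_orthogonal he, smul_eq_mul]
  field_simp

end Matrix

theorem sum_hammingNorm_fiberwise {ι β M : Type*} [Fintype ι] [DecidableEq ι] [Fintype β]
    [DecidableEq β] [Zero β] [CommSemiring M] (w : ℕ → M) (g : (ι → β) → M) :
    ∑ x, w (hammingNorm x) * g x =
      ∑ k ∈ range (Fintype.card ι + 1), w k * ∑ x with hammingNorm x = k, g x := by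
  rw [← sum_fiberwise_of_maps_to (t := range (Fintype.card ι + 1)) (g := hammingNorm)
    fun x _ => mem_range_succ_iff.mpr hammingNorm_le_card_fintype]
  refine sum_congr rfl fun k _ => ?_
  rw [mul_sum]
  exact sum_congr rfl fun x hx => by rw [(mem_filter.mp hx).2]

theorem neg_one_pow_mul_neg_one_pow_of_le {R : Type*} [Ring R] {k n : ℕ} (hk : k ≤ n) :
    (-1 : R) ^ n * (-1) ^ k = if Odd (n - k) then -1 else 1 := by
  obtain ⟨j, rfl⟩ := Nat.exists_eq_add_of_le hk
  rw [Nat.add_sub_cancel_left, add_comm, pow_add, mul_assoc, ← pow_add,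
    Even.neg_one_pow ⟨k, rfl⟩, mul_one]
  split_ifs with h
  · exact h.neg_one_pow
  · exact (Nat.not_odd_iff_even.mp h).neg_one_pow

theorem neg_one_pow_mul_sum_alternating {R : Type*} [CommRing R] (n : ℕ) (L : ℕ → R) :
    (-1) ^ n * ∑ k ∈ range (n + 1), (-1) ^ k * L k =
      ∑ k ∈ range (n + 1), L k - 2 * ∑ k ∈ range (n + 1) with Odd (n - k), L k := by
  rw [sum_filter, mul_sum, mul_sum, ← sum_sub_distrib]
  refine sum_congr rfl fun k hk => ?_
  rw [← mul_assoc, neg_one_pow_mul_neg_one_pow_of_le (mem_range_succ_iff.mp hk)]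
  split_ifs <;> ring

theorem n_qudit_lorentz_norm_bloch_general (d n : ℕ) [NeZero d]
    (σ : Fin (d ^ 2) → Matrix (Fin d) (Fin d) ℂ)
    (horth : ∀ μ ν, (σ μ * σ ν).trace = if μ = ν then (d : ℂ) else 0)
    (x : (Fin n → Fin (d ^ 2)) → ℝ)
    (ρ Θρ : Matrix (Fin n → Fin d) (Fin n → Fin d) ℂ)
    (hρ : ρ = ((d : ℂ) ^ n)⁻¹ • ∑ μ : Fin n → Fin (d ^ 2), (x μ : ℂ) •
      Matrix.of (fun a b : Fin n → Fin d => ∏ i : Fin n, σ (μ i) (a i) (b i)))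
    (hΘρ : Θρ = ((d : ℂ) ^ n)⁻¹ • ∑ μ : Fin n → Fin (d ^ 2),
      (((-1 : ℂ) ^ (Finset.univ.filter fun i => μ i ≠ 0).card) * (x μ : ℂ)) •
      Matrix.of (fun a b : Fin n → Fin d => ∏ i : Fin n, σ (μ i) (a i) (b i)))
    (L : ℕ → ℝ)
    (hL : ∀ k, L k = ∑ μ ∈ Finset.univ.filter
        (fun μ : Fin n → Fin (d ^ 2) => (Finset.univ.filter fun i => μ i ≠ 0).card = k),
      x μ ^ 2) :
    ((d : ℂ) ^ n) * (ρ * Θρ).trace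
        = ∑ k ∈ Finset.range (n + 1), (-1 : ℂ) ^ k * (L k : ℂ) ∧
    ((-1 : ℂ) ^ n) * ((d : ℂ) ^ n) * (ρ * Θρ).trace
        = ((d : ℂ) ^ n) * (ρ * ρ).trace -
          2 * ∑ j ∈ (Finset.range (n + 1)).filter (fun j => Odd (n - j)), (L j : ℂ) := by
  have horth_pi := trace_piKron_mul_piKron_of_orthogonal (κ := Fin n) horth
  rw [Fintype.card_fin] at horth_pi
  have hdn : (d : ℂ) ^ n ≠ 0 := pow_ne_zero _ (Nat.cast_ne_zero.mpr (NeZero.ne d))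
  -- the basis matrices `Matrix.of ...` in `hρ`, `hΘρ` are `piKron fun i => σ (μ i)` by unfolding
  have parseval := mul_trace_inv_smul_mul_inv_smul_of_orthogonal hdn horth_pi
  have hLc (k : ℕ) : (L k : ℂ) = ∑ μ with hammingNorm μ = k, (x μ : ℂ) * x μ := by
    simp only [hL, hammingNorm, sq]
    push_cast
    rfl
  have hρΘρ : (d : ℂ) ^ n * (ρ * Θρ).trace = ∑ k ∈ range (n + 1), (-1 : ℂ) ^ k * L k := by
    have := sum_hammingNorm_fiberwise (fun k => (-1 : ℂ) ^ k) fun μ => (x μ : ℂ) * x μ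
    simp only [Fintype.card_fin, ← hLc] at this
    rw [hρ, hΘρ, ← this]
    exact (parseval _ _).trans (sum_congr rfl fun μ _ => mul_left_comm _ _ _)
  have hρρ : (d : ℂ) ^ n * (ρ * ρ).trace = ∑ k ∈ range (n + 1), (L k : ℂ) := by
    have := sum_hammingNorm_fiberwise (fun _ => (1 : ℂ)) fun μ => (x μ : ℂ) * x μ
    simp only [Fintype.card_fin, ← hLc, one_mul] at this
    rw [hρ, ← this]
    exact parseval _ _
  refine ⟨hρΘρ, ?_⟩
  rw [mul_assoc, hρΘρ, hρρ, neg_one_pow_mul_sum_alternating]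

/-- for an n-qudit Hermitian matrix with Bloch coefficients `x`, and the
generalized conjugation `Θ` acting as `σ_0 ↦ σ_0`, `σ_j ↦ −σ_j` in each tensor factor,
`d^n Tr(ρ Θ^{⊗n}(ρ)) = Σ_k (−1)^k L_k`, and consequently
`(−1)^n d^n Tr(ρ Θ^{⊗n}(ρ)) = d^n Tr(ρ²) − 2 Σ_{j : n−j odd} L_j`. -/
theorem n_qudit_lorentz_norm_bloch (d n : ℕ) [NeZero d]
    (σ : Fin (d ^ 2) → Matrix (Fin d) (Fin d) ℂ)
    (hσ0 : σ 0 = 1)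
    (hherm : ∀ μ, (σ μ).IsHermitian)
    (htraceless : ∀ j, j ≠ 0 → (σ j).trace = 0)
    (horth : ∀ μ ν, (σ μ * σ ν).trace = if μ = ν then (d : ℂ) else 0)
    (x : (Fin n → Fin (d ^ 2)) → ℝ)
    (ρ Θρ : Matrix (Fin n → Fin d) (Fin n → Fin d) ℂ)
    (hρ : ρ = ((d : ℂ) ^ n)⁻¹ • ∑ μ : Fin n → Fin (d ^ 2), (x μ : ℂ) •
      Matrix.of (fun a b : Fin n → Fin d => ∏ i : Fin n, σ (μ i) (a i) (b i)))
    (hΘρ : Θρ = ((d : ℂ) ^ n)⁻¹ • ∑ μ : Fin n → Fin (d ^ 2),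
      (((-1 : ℂ) ^ (Finset.univ.filter fun i => μ i ≠ 0).card) * (x μ : ℂ)) •
      Matrix.of (fun a b : Fin n → Fin d => ∏ i : Fin n, σ (μ i) (a i) (b i)))
    (L : ℕ → ℝ)
    (hL : ∀ k, L k = ∑ μ ∈ Finset.univ.filter
        (fun μ : Fin n → Fin (d ^ 2) => (Finset.univ.filter fun i => μ i ≠ 0).card = k),
      x μ ^ 2) :
    ((d : ℂ) ^ n) * (ρ * Θρ).trace
        = ∑ k ∈ Finset.range (n + 1), (-1 : ℂ) ^ k * (L k : ℂ) ∧
    ((-1 : ℂ) ^ n) * ((d : ℂ) ^ n) * (ρ * Θρ).trace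
        = ((d : ℂ) ^ n) * (ρ * ρ).trace -
          2 * ∑ j ∈ (Finset.range (n + 1)).filter (fun j => Odd (n - j)), (L j : ℂ) :=
  n_qudit_lorentz_norm_bloch_general d n σ horth x ρ Θρ hρ hΘρ L hL
end
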